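/- The r,s-Lah convolution identity: for all n ∈ ℕ, k ∈ {0,…,n} and all real r, s, Σ_{j=k}^n S1_r(n,j) · S2_s(j,k) = L(n,k)_{(r+s)/2}, where L(n,k)_t = C(n+2t−1, k+2t−1) · n!/k! is the t-Lah number. -/

import Mathlib

/-!
Expanding `(x + r)^{n↑} = ∑ⱼ S1_r(n,j) xʲ` and applying `(1/k!) Δᵏ` at `x = s`, linearity of `Δ`
turns the left-hand side into `(1/k!) Δᵏ[(x + r)^{n↑}]` at `x = s` (the terms with `j < k` vanish).
Since `Δ x^{(n+1)↑} = (n + 1) (x + 1)^{n↑}`, this equals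
`(n!/(k!(n-k)!)) (s + r + k)^{(n-k)↑}`, which is `L(n,k)` at `t = (r + s)/2`.
-/

open Polynomial Finset

/-- The `r`-Stirling number of the first kind, defined as `(1/k!)` times the `k`-th
derivative in `r` of the rising factorial `r^{n↑}`. -/
noncomputable def S1r (r : ℝ) (n k : ℕ) : ℝ :=
  (1 / (k.factorial : ℝ)) * deriv^[k] (fun x : ℝ => (ascPochhammer ℝ n).eval x) r

/-- The forward finite difference operator `(Δ f)(r) = f (r+1) - f r`. -/
def fdiff (f : ℝ → ℝ) : ℝ → ℝ := fun r => f (r + 1) - f r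

/-- The `r`-Stirling number of the second kind, `(1/k!) Δ^k (r^n)`. -/
noncomputable def S2r (r : ℝ) (n k : ℕ) : ℝ :=
  (1 / (k.factorial : ℝ)) * (fdiff^[k] (fun x : ℝ => x ^ n)) r

/-- The `t`-Lah number `L(n,k)_t = (n!/k!) · (k+2t)^{(n−k)↑}/(n−k)!`. -/
noncomputable def rLah (t : ℝ) (n k : ℕ) : ℝ :=
  ((n.factorial : ℝ) / (k.factorial : ℝ)) *
    ((ascPochhammer ℝ (n - k)).eval ((k : ℝ) + 2 * t) / ((n - k).factorial : ℝ))

open fwdDiff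

theorem iterate_deriv_polynomial_eval {𝕜 : Type*} [NontriviallyNormedField 𝕜] (p : 𝕜[X])
    (k : ℕ) :
    deriv^[k] (fun x => p.eval x) = fun x => (derivative^[k] p).eval x := by
  induction k generalizing p with
  | zero => rfl
  | succ k ih =>
    have h : deriv (fun x => p.eval x) = fun x => p.derivative.eval x :=
      funext fun _ => Polynomial.deriv p
    rw [Function.iterate_succ_apply, h, ih, Function.iterate_succ_apply]

namespace Polynomial

theorem fwdDiff_ascPochhammer_eval {R : Type*} [CommRing R] (n : ℕ) :
    Δ_[1] (ascPochhammer R (n + 1)).eval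
      = (n + 1 : R) • fun x => (ascPochhammer R n).eval (x + 1) := by
  funext x
  have h := congrArg (eval x) (ascPochhammer_succ_comp_X_add_one (S := R) n)
  simp only [eval_comp, eval_add, eval_X, eval_one, nsmul_eq_mul, eval_mul, eval_natCast] at h
  simp only [fwdDiff, h, Pi.smul_apply, smul_eq_mul]
  push_cast
  ring

theorem fwdDiff_iter_ascPochhammer_eval {R : Type*} [CommRing R] {n k : ℕ} (hk : k ≤ n)
    (x : R) :
    (Δ_[1])^[k] (ascPochhammer R n).eval x
      = n.descFactorial k * (ascPochhammer R (n - k)).eval (x + k) := by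
  induction k generalizing n x with
  | zero => simp
  | succ k ih =>
    obtain ⟨m, rfl⟩ : ∃ m, n = m + 1 := ⟨n - 1, by omega⟩
    rw [Function.iterate_succ_apply, fwdDiff_ascPochhammer_eval, fwdDiff_iter_const_smul,
      Pi.smul_apply, fwdDiff_iter_comp_add 1 (ascPochhammer R m).eval, ih (by omega),
      Nat.succ_descFactorial_succ, Nat.add_sub_add_right, smul_eq_mul]
    push_cast
    rw [show x + 1 + k = x + (k + 1) by ring]
    ring

end Polynomial

theorem fdiff_eq_fwdDiff : fdiff = Δ_[1] := rfl

theorem S1r_eq_coeff_taylor (r : ℝ) (n j : ℕ) :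
    S1r r n j = (taylor r (ascPochhammer ℝ n)).coeff j := by
  have hj : (j.factorial : ℝ) ≠ 0 := Nat.cast_ne_zero.mpr j.factorial_ne_zero
  rw [S1r, iterate_deriv_polynomial_eval, ← factorial_smul_hasseDeriv, taylor_coeff]
  dsimp only
  rw [LinearMap.smul_apply, eval_smul, nsmul_eq_mul]
  field_simp

theorem S2r_eq_zero_of_lt (s : ℝ) {j k : ℕ} (h : j < k) : S2r s j k = 0 := by
  rw [S2r, fdiff_eq_fwdDiff, fwdDiff_iter_pow_eq_zero_of_lt h, Pi.zero_apply, mul_zero]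

theorem sum_coeff_mul_S2r {P : ℝ[X]} {N : ℕ} (hN : P.natDegree < N) (s : ℝ) (k : ℕ) :
    ∑ j ∈ range N, P.coeff j * S2r s j k = 1 / k.factorial * (Δ_[1])^[k] P.eval s := by
  simp_rw [S2r, fdiff_eq_fwdDiff, mul_left_comm _ (1 / _ : ℝ), ← mul_sum,
    P.eval_eq_sum_range' hN, ← Finset.sum_apply _ _ (fun j x => P.coeff j * x ^ j),
    fwdDiff_iter_finsetSum, Finset.sum_apply, ← smul_eq_mul, ← Pi.smul_def,
    fwdDiff_iter_const_smul, Pi.smul_apply]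

theorem rs_Lah_convolution_general (n k : ℕ) (hk : k ≤ n) (r s : ℝ) :
    ∑ j ∈ Finset.Icc k n, S1r r n j * S2r s j k = rLah ((r + s) / 2) n k := by
  have hdeg : (taylor r (ascPochhammer ℝ n)).natDegree < n + 1 := by
    rw [natDegree_taylor, ascPochhammer_natDegree]
    exact n.lt_succ_self
  have hrange : ∑ j ∈ Icc k n, S1r r n j * S2r s j k
      = ∑ j ∈ range (n + 1), S1r r n j * S2r s j k := by
    refine sum_subset (fun j hj => by simp only [mem_Icc, mem_range] at hj ⊢; omega)
      fun j hj hjk => ?_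
    simp only [mem_range, mem_Icc] at hj hjk
    rw [S2r_eq_zero_of_lt s (by omega), mul_zero]
  have hshift : (Δ_[1])^[k] (taylor r (ascPochhammer ℝ n)).eval s
      = (Δ_[1])^[k] (ascPochhammer ℝ n).eval (s + r) := by
    simp_rw [taylor_eval]
    exact fwdDiff_iter_comp_add 1 (ascPochhammer ℝ n).eval r k s
  have hfact : (n.descFactorial k : ℝ) = n.factorial / (n - k).factorial := by
    rw [eq_div_iff (by positivity), ← Nat.factorial_mul_descFactorial hk]
    push_cast
    ring
  simp_rw [hrange, S1r_eq_coeff_taylor]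
  rw [sum_coeff_mul_S2r hdeg, hshift, fwdDiff_iter_ascPochhammer_eval hk, hfact, rLah]
  rw [show (k : ℝ) + 2 * ((r + s) / 2) = s + r + k by ring]
  ring

theorem rs_Lah_convolution (n k : ℕ) (hn : 1 ≤ n) (hk : k ≤ n) (r s : ℝ) :
    ∑ j ∈ Finset.Icc k n, S1r r n j * S2r s j k = rLah ((r + s) / 2) n k :=
  rs_Lah_convolution_general n k hk r s
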